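/- arXiv:2104.05584 — 2 statements merged into one kernel-verified Lean document; each statement's English description precedes it below -/
import Mathlib

section
/- Let u, u* ∈ C⁵([0,1]×[0,T]) with u the classical solution of the Kawahara equation with given boundary data, û = u* − u, R_int the interior residual, R_sb1,…,R_sb5 the boundary residuals (values of û, û_x at both endpoints and û_xx at x=1), and R_tb(x) = û(x,0). Then for all T̄ ∈ [0,T]: ∫₀¹ û(x,T̄)² dx ≤ (1 + 2C₃ T e^{2C₃T}) · [∫₀¹ R_tb² dx + 10 C₁ T^{1/2}(Σᵢ∫₀ᵀ R_sbi² dt)^{1/2} + 2C₂ Σᵢ∫₀ᵀ R_sbi² dt + ∫₀ᵀ∫₀¹ R_int² dx dt], where C₁ = ‖u‖_{C⁰ₜC⁴ₓ} + ‖u*‖_{C⁰ₜC⁴ₓ}, C₂ = (1/2)‖u‖_{C⁰ₜC⁰ₓ} + 1/2, C₃ = ‖u*‖_{C⁰ₜC¹ₓ} + (1/2)‖u‖_{C⁰ₜC¹ₓ} + 1/2. -/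
open Set intervalIntegral Real MeasureTheory

/-- Mixed norm ‖v‖_{C^m_t C^n_x} := Σ_{i≤m, j≤n} sup_{(x,t)∈[0,1]×[0,T]} |∂ᵗⁱ∂ₓʲ v(x,t)|. -/
noncomputable def mixedNorm (m n : ℕ) (T : ℝ) (v : ℝ → ℝ → ℝ) : ℝ :=
  ∑ i ∈ Finset.range (m + 1), ∑ j ∈ Finset.range (n + 1),
    sSup ((fun p : ℝ × ℝ =>
      |iteratedDeriv i (fun τ => iteratedDeriv j (fun ξ => v ξ τ) p.1) p.2|) ''
      (Icc (0:ℝ) 1 ×ˢ Icc (0:ℝ) T))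

noncomputable def pd1 (F : ℝ × ℝ → ℝ) : ℝ × ℝ → ℝ := fun p => fderiv ℝ F p (1, 0)
noncomputable def pd2 (F : ℝ × ℝ → ℝ) : ℝ × ℝ → ℝ := fun p => fderiv ℝ F p (0, 1)


lemma contDiff_pd1 {F : ℝ × ℝ → ℝ} (hF : ContDiff ℝ (⊤ : ℕ∞) F) : ContDiff ℝ (⊤ : ℕ∞) (pd1 F) := by
  have h := hF.fderiv_right (m := (⊤ : ℕ∞)) (by simp)
  exact (ContinuousLinearMap.apply ℝ ℝ ((1:ℝ), (0:ℝ))).contDiff.comp h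

lemma contDiff_pd2 {F : ℝ × ℝ → ℝ} (hF : ContDiff ℝ (⊤ : ℕ∞) F) : ContDiff ℝ (⊤ : ℕ∞) (pd2 F) := by
  have h := hF.fderiv_right (m := (⊤ : ℕ∞)) (by simp)
  exact (ContinuousLinearMap.apply ℝ ℝ ((0:ℝ), (1:ℝ))).contDiff.comp h

lemma contDiff_pd1_iter {F : ℝ × ℝ → ℝ} (hF : ContDiff ℝ (⊤ : ℕ∞) F) (j : ℕ) :
    ContDiff ℝ (⊤ : ℕ∞) (pd1^[j] F) := by
  induction j generalizing F with
  | zero => exact hF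
  | succ n ih => rw [Function.iterate_succ_apply]; exact ih (contDiff_pd1 hF)

lemma hasDerivAt_slice1 {F : ℝ × ℝ → ℝ} (hF : ContDiff ℝ (⊤ : ℕ∞) F) (t x : ℝ) :
    HasDerivAt (fun ξ => F (ξ, t)) (pd1 F (x, t)) x := by
  have h1 : HasFDerivAt F (fderiv ℝ F (x, t)) (x, t) :=
    (hF.differentiable (by simp) (x, t)).hasFDerivAt
  have h2 : HasDerivAt (fun ξ : ℝ => (ξ, t)) ((1:ℝ), (0:ℝ)) x :=
    (hasDerivAt_id x).prodMk (hasDerivAt_const x t)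
  exact h1.comp_hasDerivAt x h2

lemma hasDerivAt_slice2 {F : ℝ × ℝ → ℝ} (hF : ContDiff ℝ (⊤ : ℕ∞) F) (x t : ℝ) :
    HasDerivAt (fun τ => F (x, τ)) (pd2 F (x, t)) t := by
  have h1 : HasFDerivAt F (fderiv ℝ F (x, t)) (x, t) :=
    (hF.differentiable (by simp) (x, t)).hasFDerivAt
  have h2 : HasDerivAt (fun τ : ℝ => (x, τ)) ((0:ℝ), (1:ℝ)) t :=
    (hasDerivAt_const t x).prodMk (hasDerivAt_id t)
  exact h1.comp_hasDerivAt t h2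

lemma deriv_slice1 {F : ℝ × ℝ → ℝ} (hF : ContDiff ℝ (⊤ : ℕ∞) F) (t : ℝ) :
    deriv (fun ξ => F (ξ, t)) = fun x => pd1 F (x, t) := by
  funext x; exact (hasDerivAt_slice1 hF t x).deriv

lemma iteratedDeriv_slice1 {j : ℕ} : ∀ {F : ℝ × ℝ → ℝ}, ContDiff ℝ (⊤ : ℕ∞) F → ∀ (t x : ℝ),
    iteratedDeriv j (fun ξ => F (ξ, t)) x = pd1^[j] F (x, t) := by
  induction j with
  | zero => intro F hF t x; simp
  | succ n ih =>
    intro F hF t x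
    rw [iteratedDeriv_succ', deriv_slice1 hF t]
    have := ih (contDiff_pd1 hF) t x
    rw [Function.iterate_succ_apply]
    exact this


lemma abs_le_mixedNorm {v : ℝ → ℝ → ℝ} (hV : ContDiff ℝ (⊤ : ℕ∞) (fun p : ℝ × ℝ => v p.1 p.2))
    {T : ℝ} (hT : 0 ≤ T) {n j : ℕ} (hj : j ≤ n) {x t : ℝ}
    (hx : x ∈ Icc (0:ℝ) 1) (ht : t ∈ Icc (0:ℝ) T) :
    |pd1^[j] (fun p : ℝ × ℝ => v p.1 p.2) (x, t)| ≤ mixedNorm 0 n T v := by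
  set F : ℝ × ℝ → ℝ := fun p => v p.1 p.2 with hFdef
  have hK : IsCompact (Icc (0:ℝ) 1 ×ˢ Icc (0:ℝ) T) := isCompact_Icc.prod isCompact_Icc
  have hset : ∀ j' : ℕ, ((fun p : ℝ × ℝ =>
      |iteratedDeriv 0 (fun τ => iteratedDeriv j' (fun ξ => v ξ τ) p.1) p.2|) ''
      (Icc (0:ℝ) 1 ×ˢ Icc (0:ℝ) T)) =
      ((fun p : ℝ × ℝ => |pd1^[j'] F p|) '' (Icc (0:ℝ) 1 ×ˢ Icc (0:ℝ) T)) := by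
    intro j'
    apply image_congr
    intro p _
    rw [iteratedDeriv_zero]
    congr 1
    exact iteratedDeriv_slice1 hV p.2 p.1
  have hbdd : ∀ j' : ℕ, BddAbove ((fun p : ℝ × ℝ => |pd1^[j'] F p|) ''
      (Icc (0:ℝ) 1 ×ˢ Icc (0:ℝ) T)) := fun j' =>
    hK.bddAbove_image ((contDiff_pd1_iter hV j').continuous.abs.continuousOn)
  have hmem : (x, t) ∈ Icc (0:ℝ) 1 ×ˢ Icc (0:ℝ) T := ⟨hx, ht⟩
  have hle : ∀ j' : ℕ, ∀ p ∈ Icc (0:ℝ) 1 ×ˢ Icc (0:ℝ) T,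
      |pd1^[j'] F p| ≤ sSup ((fun p : ℝ × ℝ => |pd1^[j'] F p|) ''
        (Icc (0:ℝ) 1 ×ˢ Icc (0:ℝ) T)) := fun j' p hp =>
    le_csSup (hbdd j') (mem_image_of_mem _ hp)
  have hnonneg : ∀ j' : ℕ, (0:ℝ) ≤ sSup ((fun p : ℝ × ℝ => |pd1^[j'] F p|) ''
      (Icc (0:ℝ) 1 ×ˢ Icc (0:ℝ) T)) := fun j' =>
    le_trans (abs_nonneg _) (hle j' (x, t) hmem)
  rw [mixedNorm, Finset.sum_range_one]
  simp only [hset]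
  exact le_trans (hle j (x, t) hmem)
    (Finset.single_le_sum (fun j' _ => hnonneg j') (Finset.mem_range.mpr (Nat.lt_succ_of_le hj)))

lemma mixedNorm_nonneg {v : ℝ → ℝ → ℝ} (hV : ContDiff ℝ (⊤ : ℕ∞) (fun p : ℝ × ℝ => v p.1 p.2))
    {T : ℝ} (hT : 0 ≤ T) (n : ℕ) : (0:ℝ) ≤ mixedNorm 0 n T v :=
  le_trans (abs_nonneg _) (abs_le_mixedNorm hV hT (Nat.zero_le n)
    (⟨le_refl 0, zero_le_one⟩) (⟨le_refl 0, hT⟩))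


lemma contDiff_iteratedDeriv_top {f : ℝ → ℝ} (hf : ContDiff ℝ (⊤ : ℕ∞) f) (k : ℕ) :
    ContDiff ℝ (⊤:ℕ∞) (iteratedDeriv k f) := by
  have hf' : ContDiff ℝ (⊤:ℕ∞) f := hf.of_le (by simp)
  rw [iteratedDeriv_eq_iterate]; exact hf'.iterate_deriv k

lemma hasDerivAt_iteratedDeriv {f : ℝ → ℝ} (hf : ContDiff ℝ (⊤ : ℕ∞) f) (k : ℕ) (x : ℝ) :
    HasDerivAt (iteratedDeriv k f) (iteratedDeriv (k + 1) f x) x := by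
  have h := ((contDiff_iteratedDeriv_top hf k).differentiable (by simp) x).hasDerivAt
  rwa [iteratedDeriv_succ, show deriv (iteratedDeriv k f) x = _ from rfl]

/-- ∫₀¹ f f''' = [f f'' - (f')²/2]₀¹ -/
lemma ibp3 {f : ℝ → ℝ} (hf : ContDiff ℝ (⊤ : ℕ∞) f) :
    (∫ x in (0:ℝ)..1, f x * iteratedDeriv 3 f x) =
      (f 1 * iteratedDeriv 2 f 1 - (iteratedDeriv 1 f 1)^2 / 2)
        - (f 0 * iteratedDeriv 2 f 0 - (iteratedDeriv 1 f 0)^2 / 2) := by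
  have key : ∀ x : ℝ, HasDerivAt (fun y => f y * iteratedDeriv 2 f y - (iteratedDeriv 1 f y)^2 / 2)
      (f x * iteratedDeriv 3 f x) x := by
    intro x
    have h0 : HasDerivAt f (iteratedDeriv 1 f x) x := by
      simpa using hasDerivAt_iteratedDeriv hf 0 x
    have h1 := hasDerivAt_iteratedDeriv hf 1 x
    have h2 := hasDerivAt_iteratedDeriv hf 2 x
    have := (h0.fun_mul h2).fun_sub (((h1.fun_pow 2)).div_const 2)
    refine this.congr_deriv ?_
    ring
  rw [← intervalIntegral.integral_deriv_eq_sub (fun x _ => (key x).differentiableAt)]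
  · congr 1; funext x; exact ((key x).deriv).symm
  · apply Continuous.intervalIntegrable
    have : deriv (fun y => f y * iteratedDeriv 2 f y - (iteratedDeriv 1 f y)^2 / 2)
        = fun x => f x * iteratedDeriv 3 f x := funext fun x => (key x).deriv
    rw [this]
    exact (hf.continuous.mul (contDiff_iteratedDeriv_top hf 3).continuous)

lemma ftc01 {Φ g : ℝ → ℝ} (h : ∀ x : ℝ, HasDerivAt Φ (g x) x) (hg : Continuous g) :
    (∫ x in (0:ℝ)..1, g x) = Φ 1 - Φ 0 :=
  intervalIntegral.integral_eq_sub_of_hasDerivAt (fun x _ => h x) (hg.intervalIntegrable 0 1)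

/-- ∫₀¹ f f''''' = [f f'''' - f' f''' + (f'')²/2]₀¹ -/
lemma ibp5 {f : ℝ → ℝ} (hf : ContDiff ℝ (⊤ : ℕ∞) f) :
    (∫ x in (0:ℝ)..1, f x * iteratedDeriv 5 f x) =
      (f 1 * iteratedDeriv 4 f 1 - iteratedDeriv 1 f 1 * iteratedDeriv 3 f 1
          + (iteratedDeriv 2 f 1)^2 / 2)
        - (f 0 * iteratedDeriv 4 f 0 - iteratedDeriv 1 f 0 * iteratedDeriv 3 f 0
          + (iteratedDeriv 2 f 0)^2 / 2) := by
  have key : ∀ x : ℝ, HasDerivAt (fun y => f y * iteratedDeriv 4 f y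
      - iteratedDeriv 1 f y * iteratedDeriv 3 f y + (iteratedDeriv 2 f y)^2 / 2)
      (f x * iteratedDeriv 5 f x) x := by
    intro x
    have h0 : HasDerivAt f (iteratedDeriv 1 f x) x := by
      simpa using hasDerivAt_iteratedDeriv hf 0 x
    have h1 := hasDerivAt_iteratedDeriv hf 1 x
    have h2 := hasDerivAt_iteratedDeriv hf 2 x
    have h3 := hasDerivAt_iteratedDeriv hf 3 x
    have h4 := hasDerivAt_iteratedDeriv hf 4 x
    have := ((h0.fun_mul h4).fun_sub (h1.fun_mul h3)).fun_add ((h2.fun_pow 2).div_const 2)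
    refine this.congr_deriv ?_
    push_cast
    ring
  exact ftc01 key (hf.continuous.mul (contDiff_iteratedDeriv_top hf 5).continuous)

/-- ∫₀¹ (w f f' + w' f²/2) = [w f²/2]₀¹ -/
lemma ibp1 {w f : ℝ → ℝ} (hw : ContDiff ℝ (⊤ : ℕ∞) w) (hf : ContDiff ℝ (⊤ : ℕ∞) f) :
    (∫ x in (0:ℝ)..1, (w x * (f x * iteratedDeriv 1 f x)
        + iteratedDeriv 1 w x * (f x)^2 / 2)) =
      w 1 * (f 1)^2 / 2 - w 0 * (f 0)^2 / 2 := by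
  have key : ∀ x : ℝ, HasDerivAt (fun y => w y * (f y)^2 / 2)
      (w x * (f x * iteratedDeriv 1 f x) + iteratedDeriv 1 w x * (f x)^2 / 2) x := by
    intro x
    have h0 : HasDerivAt f (iteratedDeriv 1 f x) x := by
      simpa using hasDerivAt_iteratedDeriv hf 0 x
    have hw0 : HasDerivAt w (iteratedDeriv 1 w x) x := by
      simpa using hasDerivAt_iteratedDeriv hw 0 x
    have := (hw0.fun_mul (h0.fun_pow 2)).div_const 2
    refine this.congr_deriv ?_
    push_cast
    ring
  exact ftc01 key (((hw.continuous.mul (hf.continuous.mul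
    (contDiff_iteratedDeriv_top hf 1).continuous)).add
    (((contDiff_iteratedDeriv_top hw 1).continuous.mul (hf.continuous.pow 2)).div_const 2)))


lemma mul_le_abs_mul {a b B : ℝ} (hb : |b| ≤ B) : a * b ≤ |a| * B :=
  le_trans (le_abs_self _) (by rw [abs_mul]; exact mul_le_mul_of_nonneg_left hb (abs_nonneg a))

lemma neg_mul_le_abs_mul {a b B : ℝ} (hb : |b| ≤ B) : -(a * b) ≤ |a| * B :=
  le_trans (neg_le_abs _) (by rw [abs_mul]; exact mul_le_mul_of_nonneg_left hb (abs_nonneg a))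

/-- Main slice estimate: at a fixed time, the energy-derivative integrand is controlled. -/
lemma slice_bound (w ws r f : ℝ → ℝ) (hw : ContDiff ℝ (⊤ : ℕ∞) w) (hws : ContDiff ℝ (⊤ : ℕ∞) ws)
    (hr : Continuous r) (hfdef : f = fun y => ws y - w y)
    (B1 B0u B1u B1us : ℝ)
    (hB1 : ∀ j ≤ 4, ∀ x ∈ Icc (0:ℝ) 1, |iteratedDeriv j f x| ≤ B1)
    (hB0u : ∀ x ∈ Icc (0:ℝ) 1, |w x| ≤ B0u)
    (hB1u : ∀ x ∈ Icc (0:ℝ) 1, |iteratedDeriv 1 w x| ≤ B1u)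
    (hB1us : ∀ x ∈ Icc (0:ℝ) 1, |iteratedDeriv 1 ws x| ≤ B1us) :
    (∫ x in (0:ℝ)..1, 2 * f x * (r x
        - (ws x * iteratedDeriv 1 ws x - w x * iteratedDeriv 1 w x)
        - iteratedDeriv 3 f x + iteratedDeriv 5 f x))
      ≤ (1 + 2*B1us + B1u) * (∫ x in (0:ℝ)..1, (f x)^2) + (∫ x in (0:ℝ)..1, (r x)^2)
        + B0u * ((f 0)^2 + (f 1)^2) + (iteratedDeriv 1 f 1)^2 + (iteratedDeriv 2 f 1)^2
        + 2*B1*(2*|f 0| + 2*|f 1| + |iteratedDeriv 1 f 0| + |iteratedDeriv 1 f 1|) := by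
  have hf : ContDiff ℝ (⊤ : ℕ∞) f := by rw [hfdef]; exact hws.sub hw
  have cf := hf.continuous
  have cw := hw.continuous
  have cws := hws.continuous
  have cD : ∀ k, Continuous (iteratedDeriv k f) := fun k => (contDiff_iteratedDeriv_top hf k).continuous
  have cDw : ∀ k, Continuous (iteratedDeriv k w) := fun k => (contDiff_iteratedDeriv_top hw k).continuous
  have cDws : ∀ k, Continuous (iteratedDeriv k ws) := fun k => (contDiff_iteratedDeriv_top hws k).continuous
  -- pointwise derivative decomposition
  have hf1 : ∀ x, iteratedDeriv 1 f x = iteratedDeriv 1 ws x - iteratedDeriv 1 w x := by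
    intro x
    rw [hfdef]
    simp only [iteratedDeriv_one]
    exact deriv_sub ((hws.differentiable (by simp)) x) ((hw.differentiable (by simp)) x)
  have keyfun : ∀ x, 2 * f x * (r x
        - (ws x * iteratedDeriv 1 ws x - w x * iteratedDeriv 1 w x)
        - iteratedDeriv 3 f x + iteratedDeriv 5 f x)
      = 2 * f x * r x - 2 * (f x)^2 * iteratedDeriv 1 ws x
        - 2 * (w x * (f x * iteratedDeriv 1 f x))
        - 2 * (f x * iteratedDeriv 3 f x) + 2 * (f x * iteratedDeriv 5 f x) := by
    intro x
    have h2 : f x = ws x - w x := by rw [hfdef]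
    rw [hf1 x, h2]
    ring
  -- continuity of all atoms
  have i1 : IntervalIntegrable (fun x => 2 * f x * r x) MeasureTheory.volume 0 1 :=
    ((continuous_const.mul cf).mul hr).intervalIntegrable 0 1
  have i2 : IntervalIntegrable (fun x => 2 * (f x)^2 * iteratedDeriv 1 ws x)
      MeasureTheory.volume 0 1 :=
    ((continuous_const.mul (cf.pow 2)).mul (cDws 1)).intervalIntegrable 0 1
  have i3 : IntervalIntegrable (fun x => 2 * (w x * (f x * iteratedDeriv 1 f x)))
      MeasureTheory.volume 0 1 :=
    (continuous_const.mul (cw.mul (cf.mul (cD 1)))).intervalIntegrable 0 1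
  have i4 : IntervalIntegrable (fun x => 2 * (f x * iteratedDeriv 3 f x))
      MeasureTheory.volume 0 1 :=
    (continuous_const.mul (cf.mul (cD 3))).intervalIntegrable 0 1
  have i5 : IntervalIntegrable (fun x => 2 * (f x * iteratedDeriv 5 f x))
      MeasureTheory.volume 0 1 :=
    (continuous_const.mul (cf.mul (cD 5))).intervalIntegrable 0 1
  have isq : IntervalIntegrable (fun x => (f x)^2) MeasureTheory.volume 0 1 :=
    ((cf.pow 2)).intervalIntegrable 0 1
  have irsq : IntervalIntegrable (fun x => (r x)^2) MeasureTheory.volume 0 1 :=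
    ((hr.pow 2)).intervalIntegrable 0 1
  have hcongr : (∫ x in (0:ℝ)..1, 2 * f x * (r x
        - (ws x * iteratedDeriv 1 ws x - w x * iteratedDeriv 1 w x)
        - iteratedDeriv 3 f x + iteratedDeriv 5 f x))
      = ∫ x in (0:ℝ)..1, (2 * f x * r x - 2 * (f x)^2 * iteratedDeriv 1 ws x
        - 2 * (w x * (f x * iteratedDeriv 1 f x))
        - 2 * (f x * iteratedDeriv 3 f x) + 2 * (f x * iteratedDeriv 5 f x)) :=
    intervalIntegral.integral_congr (fun x _ => keyfun x)
  rw [hcongr, intervalIntegral.integral_add ((((i1.sub i2)).sub i3).sub i4) i5,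
    intervalIntegral.integral_sub ((i1.sub i2).sub i3) i4,
    intervalIntegral.integral_sub (i1.sub i2) i3,
    intervalIntegral.integral_sub i1 i2]
  -- Term 1
  have hT1 : (∫ x in (0:ℝ)..1, 2 * f x * r x)
      ≤ (∫ x in (0:ℝ)..1, (f x)^2) + (∫ x in (0:ℝ)..1, (r x)^2) := by
    rw [← intervalIntegral.integral_add isq irsq]
    apply intervalIntegral.integral_mono_on (by norm_num) i1 (isq.add irsq)
    intro x _
    nlinarith [sq_nonneg (f x - r x)]
  -- Term 2
  have hT2 : -(∫ x in (0:ℝ)..1, 2 * (f x)^2 * iteratedDeriv 1 ws x)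
      ≤ 2 * B1us * (∫ x in (0:ℝ)..1, (f x)^2) := by
    rw [← intervalIntegral.integral_neg, ← intervalIntegral.integral_const_mul]
    apply intervalIntegral.integral_mono_on (by norm_num) i2.neg
      (isq.const_mul _)
    intro x hx
    have h := neg_mul_le_abs_mul (a := 2 * (f x)^2) (hB1us x hx)
    rw [abs_of_nonneg (by positivity : (0:ℝ) ≤ 2 * (f x)^2)] at h
    simp only [Pi.neg_apply]
    nlinarith [h]
  -- Term 3 : integration by parts with w
  have iA : IntervalIntegrable (fun x => w x * (f x * iteratedDeriv 1 f x))
      MeasureTheory.volume 0 1 := ((cw.mul (cf.mul (cD 1)))).intervalIntegrable 0 1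
  have iB : IntervalIntegrable (fun x => iteratedDeriv 1 w x * (f x)^2 / 2)
      MeasureTheory.volume 0 1 := (((cDw 1).mul (cf.pow 2)).div_const 2).intervalIntegrable 0 1
  have hI3 : (∫ x in (0:ℝ)..1, w x * (f x * iteratedDeriv 1 f x))
      = (w 1 * (f 1)^2 / 2 - w 0 * (f 0)^2 / 2)
        - ∫ x in (0:ℝ)..1, iteratedDeriv 1 w x * (f x)^2 / 2 := by
    have h := ibp1 hw hf
    rw [intervalIntegral.integral_add iA iB] at h
    linarith
  have hIB : (∫ x in (0:ℝ)..1, iteratedDeriv 1 w x * (f x)^2 / 2)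
      ≤ B1u / 2 * (∫ x in (0:ℝ)..1, (f x)^2) := by
    rw [← intervalIntegral.integral_const_mul]
    apply intervalIntegral.integral_mono_on (by norm_num) iB (isq.const_mul _)
    intro x hx
    have h1 : iteratedDeriv 1 w x ≤ B1u := (le_abs_self _).trans (hB1u x hx)
    nlinarith [sq_nonneg (f x)]
  have hT3 : -(∫ x in (0:ℝ)..1, 2 * (w x * (f x * iteratedDeriv 1 f x)))
      ≤ B0u * ((f 0)^2 + (f 1)^2) + B1u * (∫ x in (0:ℝ)..1, (f x)^2) := by
    rw [intervalIntegral.integral_const_mul, hI3]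
    have h0 : (f 0)^2 * w 0 ≤ |(f 0)^2| * B0u :=
      mul_le_abs_mul (hB0u 0 (by norm_num))
    have h1 : -((f 1)^2 * w 1) ≤ |(f 1)^2| * B0u :=
      neg_mul_le_abs_mul (hB0u 1 (by norm_num))
    rw [abs_of_nonneg (sq_nonneg (f 0))] at h0
    rw [abs_of_nonneg (sq_nonneg (f 1))] at h1
    nlinarith [hIB]
  -- Term 4
  have hT4 : -(2 * ∫ x in (0:ℝ)..1, f x * iteratedDeriv 3 f x)
      ≤ 2 * B1 * |f 0| + 2 * B1 * |f 1| + (iteratedDeriv 1 f 1)^2 := by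
    rw [ibp3 hf]
    have h1 : -(f 1 * iteratedDeriv 2 f 1) ≤ |f 1| * B1 :=
      neg_mul_le_abs_mul (hB1 2 (by norm_num) 1 (by norm_num))
    have h0 : f 0 * iteratedDeriv 2 f 0 ≤ |f 0| * B1 :=
      mul_le_abs_mul (hB1 2 (by norm_num) 0 (by norm_num))
    nlinarith [sq_nonneg (iteratedDeriv 1 f 0)]
  -- Term 5
  have hT5 : 2 * (∫ x in (0:ℝ)..1, f x * iteratedDeriv 5 f x)
      ≤ 2 * B1 * (|f 0| + |f 1| + |iteratedDeriv 1 f 0| + |iteratedDeriv 1 f 1|)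
        + (iteratedDeriv 2 f 1)^2 := by
    rw [ibp5 hf]
    have h1 : f 1 * iteratedDeriv 4 f 1 ≤ |f 1| * B1 :=
      mul_le_abs_mul (hB1 4 (by norm_num) 1 (by norm_num))
    have h2 : -(iteratedDeriv 1 f 1 * iteratedDeriv 3 f 1) ≤ |iteratedDeriv 1 f 1| * B1 :=
      neg_mul_le_abs_mul (hB1 3 (by norm_num) 1 (by norm_num))
    have h3 : -(f 0 * iteratedDeriv 4 f 0) ≤ |f 0| * B1 :=
      neg_mul_le_abs_mul (hB1 4 (by norm_num) 0 (by norm_num))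
    have h4 : iteratedDeriv 1 f 0 * iteratedDeriv 3 f 0 ≤ |iteratedDeriv 1 f 0| * B1 :=
      mul_le_abs_mul (hB1 3 (by norm_num) 0 (by norm_num))
    nlinarith [sq_nonneg (iteratedDeriv 2 f 0)]
  have e4 : (∫ x in (0:ℝ)..1, 2 * (f x * iteratedDeriv 3 f x))
      = 2 * ∫ x in (0:ℝ)..1, f x * iteratedDeriv 3 f x :=
    intervalIntegral.integral_const_mul 2 _
  have e5 : (∫ x in (0:ℝ)..1, 2 * (f x * iteratedDeriv 5 f x))
      = 2 * ∫ x in (0:ℝ)..1, f x * iteratedDeriv 5 f x :=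
    intervalIntegral.integral_const_mul 2 _
  rw [e4, e5]
  linarith


lemma pd1_sub {F G : ℝ × ℝ → ℝ} (hF : ContDiff ℝ (⊤ : ℕ∞) F) (hG : ContDiff ℝ (⊤ : ℕ∞) G) :
    pd1 (fun q => F q - G q) = fun q => pd1 F q - pd1 G q := by
  funext p
  simp only [pd1]
  rw [fderiv_fun_sub ((hF.differentiable (by simp)) p) ((hG.differentiable (by simp)) p)]
  rfl

lemma pd2_sub {F G : ℝ × ℝ → ℝ} (hF : ContDiff ℝ (⊤ : ℕ∞) F) (hG : ContDiff ℝ (⊤ : ℕ∞) G) :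
    pd2 (fun q => F q - G q) = fun q => pd2 F q - pd2 G q := by
  funext p
  simp only [pd2]
  rw [fderiv_fun_sub ((hF.differentiable (by simp)) p) ((hG.differentiable (by simp)) p)]
  rfl

lemma pd1_iter_sub {j : ℕ} : ∀ {F G : ℝ × ℝ → ℝ}, ContDiff ℝ (⊤ : ℕ∞) F → ContDiff ℝ (⊤ : ℕ∞) G →
    pd1^[j] (fun q => F q - G q) = fun q => pd1^[j] F q - pd1^[j] G q := by
  induction j with
  | zero => intro F G _ _; rfl
  | succ n ih =>
    intro F G hF hG
    rw [Function.iterate_succ_apply, pd1_sub hF hG, Function.iterate_succ_apply,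
      Function.iterate_succ_apply, ih (contDiff_pd1 hF) (contDiff_pd1 hG)]

/-- Cauchy–Schwarz for interval integrals: `∫₀ᵀ |R| ≤ √T √(∫₀ᵀ R²)`. -/
lemma integral_abs_le_sqrt {T : ℝ} (hT : 0 ≤ T) {R : ℝ → ℝ} (hR : Continuous R) :
    (∫ t in (0:ℝ)..T, |R t|) ≤ Real.sqrt T * Real.sqrt (∫ t in (0:ℝ)..T, (R t)^2) := by
  set A := ∫ t in (0:ℝ)..T, |R t| with hA
  set B := ∫ t in (0:ℝ)..T, (R t)^2 with hB
  have hiA : IntervalIntegrable (fun t => |R t|) MeasureTheory.volume 0 T :=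
    hR.abs.intervalIntegrable 0 T
  have hiB : IntervalIntegrable (fun t => (R t)^2) MeasureTheory.volume 0 T :=
    (hR.pow 2).intervalIntegrable 0 T
  have hBnn : 0 ≤ B := intervalIntegral.integral_nonneg hT (fun t _ => sq_nonneg _)
  have hAnn : 0 ≤ A := intervalIntegral.integral_nonneg hT (fun t _ => abs_nonneg _)
  have key : A^2 ≤ T * B := by
    have hnn : (0:ℝ) ≤ ∫ t in (0:ℝ)..T, (T * |R t| - A)^2 :=
      intervalIntegral.integral_nonneg hT (fun t _ => sq_nonneg _)
    have hexp : (∫ t in (0:ℝ)..T, (T * |R t| - A)^2)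
        = T^2 * B - 2 * T * A * A + A^2 * T := by
      have e1 : ∀ t : ℝ, (T * |R t| - A)^2
          = T^2 * (R t)^2 - (2 * T * A) * |R t| + A^2 := by
        intro t
        have : |R t|^2 = (R t)^2 := sq_abs _
        nlinarith [this]
      rw [intervalIntegral.integral_congr (g := fun t =>
        T^2 * (R t)^2 - (2 * T * A) * |R t| + A^2) (fun t _ => e1 t)]
      rw [intervalIntegral.integral_add (((hiB.const_mul _).sub (hiA.const_mul _)))
        intervalIntegrable_const,
        intervalIntegral.integral_sub (hiB.const_mul _) (hiA.const_mul _),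
        intervalIntegral.integral_const_mul, intervalIntegral.integral_const_mul,
        intervalIntegral.integral_const]
      simp only [smul_eq_mul, sub_zero]
      ring
    rcases hT.eq_or_lt with h0 | hpos
    · have : A = 0 := by rw [hA, ← h0, intervalIntegral.integral_same]
      rw [this, ← h0]; simp
    · nlinarith [hnn, hexp, hAnn, mul_pos hpos hpos]
  calc A = Real.sqrt (A^2) := (Real.sqrt_sq hAnn).symm
    _ ≤ Real.sqrt (T * B) := Real.sqrt_le_sqrt key
    _ = Real.sqrt T * Real.sqrt B := Real.sqrt_mul hT B

lemma exp_le_one_add_mul_exp {x : ℝ} (hx : 0 ≤ x) : Real.exp x ≤ 1 + x * Real.exp x := by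
  have h := Real.add_one_le_exp (-x)
  have hp : 0 < Real.exp x := Real.exp_pos x
  have : (1 - x) * Real.exp x ≤ Real.exp (-x) * Real.exp x := by
    apply mul_le_mul_of_nonneg_right _ hp.le
    linarith
  rw [← Real.exp_add] at this
  simp at this
  nlinarith

lemma lagrange4 {a b c d : ℝ} (ha : 0 ≤ a) (hb : 0 ≤ b) (hc : 0 ≤ c) (hd : 0 ≤ d) :
    2*a + 2*b + c + d ≤ Real.sqrt 10 * Real.sqrt (a^2 + b^2 + c^2 + d^2) := by
  have h10 : Real.sqrt 10 * Real.sqrt (a^2+b^2+c^2+d^2)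
      = Real.sqrt (10 * (a^2+b^2+c^2+d^2)) := (Real.sqrt_mul (by norm_num) _).symm
  rw [h10]
  have hle : (2*a + 2*b + c + d)^2 ≤ 10 * (a^2+b^2+c^2+d^2) := by
    nlinarith [sq_nonneg (2*b-2*a), sq_nonneg (2*c-a), sq_nonneg (2*d-a),
      sq_nonneg (2*c-b), sq_nonneg (2*d-b), sq_nonneg (d-c)]
  calc 2*a + 2*b + c + d = Real.sqrt ((2*a + 2*b + c + d)^2) :=
        (Real.sqrt_sq (by linarith)).symm
    _ ≤ Real.sqrt (10 * (a^2+b^2+c^2+d^2)) := Real.sqrt_le_sqrt hle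


lemma hasDerivAt_param {G : ℝ × ℝ → ℝ} (hG : ContDiff ℝ (⊤ : ℕ∞) G) (t : ℝ) :
    HasDerivAt (fun τ => ∫ x in (0:ℝ)..1, G (x, τ)) (∫ x in (0:ℝ)..1, pd2 G (x, t)) t := by
  have hKcpt : IsCompact (Icc (0:ℝ) 1 ×ˢ Icc (t-1) (t+1)) := isCompact_Icc.prod isCompact_Icc
  obtain ⟨M, hM⟩ := hKcpt.exists_bound_of_continuousOn
    ((contDiff_pd2 hG).continuous.continuousOn)
  have cG : Continuous G := hG.continuous
  have cG2 : Continuous (pd2 G) := (contDiff_pd2 hG).continuous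
  have main := intervalIntegral.hasDerivAt_integral_of_dominated_loc_of_deriv_le
    (F := fun τ x => G (x, τ)) (F' := fun τ x => pd2 G (x, τ)) (x₀ := t)
    (a := (0:ℝ)) (b := 1) (μ := volume) (bound := fun _ => M)
    (s := Metric.ball t 1) (Metric.ball_mem_nhds t one_pos)
    (Filter.Eventually.of_forall (fun τ =>
      ((cG.comp (continuous_id.prodMk continuous_const)).aestronglyMeasurable)))
    ((cG.comp (continuous_id.prodMk continuous_const)).intervalIntegrable 0 1)
    ((cG2.comp (continuous_id.prodMk continuous_const)).aestronglyMeasurable)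
    (Filter.Eventually.of_forall (fun x hx => fun τ hτ => by
      apply hM
      constructor
      · exact ⟨le_of_lt (Set.mem_Ioc.mp ((Set.uIoc_of_le (by norm_num : (0:ℝ) ≤ 1)) ▸ hx)).1,
          (Set.mem_Ioc.mp ((Set.uIoc_of_le (by norm_num : (0:ℝ) ≤ 1)) ▸ hx)).2⟩
      · have := Metric.mem_ball.mp hτ
        rw [Real.dist_eq, abs_sub_lt_iff] at this
        exact ⟨by linarith [this.1, this.2], by linarith [this.1, this.2]⟩))
    (intervalIntegrable_const)
    (Filter.Eventually.of_forall (fun x _ => fun τ _ => hasDerivAt_slice2 hG x τ))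
  exact main.2

lemma integral_mono_interval_nonneg {h : ℝ → ℝ} (hc : Continuous h) (hnn : ∀ s, 0 ≤ h s)
    {Tb T : ℝ} (h0 : 0 ≤ Tb) (hT : Tb ≤ T) :
    (∫ s in (0:ℝ)..Tb, h s) ≤ ∫ s in (0:ℝ)..T, h s := by
  have hadd := intervalIntegral.integral_add_adjacent_intervals (a := (0:ℝ)) (b := Tb) (c := T)
    (μ := MeasureTheory.volume) (hc.intervalIntegrable 0 Tb) (hc.intervalIntegrable Tb T)
  have h2 : 0 ≤ ∫ s in Tb..T, h s := intervalIntegral.integral_nonneg hT (fun s _ => hnn s)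
  linarith

set_option maxHeartbeats 1000000 in
theorem kawahara_energy_estimate (T : ℝ) (hT : 0 < T)
    (u uStar hatu : ℝ → ℝ → ℝ) (Rint : ℝ → ℝ → ℝ)
    (Rtb Rsb1 Rsb2 Rsb3 Rsb4 Rsb5 : ℝ → ℝ) (C1 C2 C3 : ℝ)
    (hu : ContDiff ℝ (⊤ : ℕ∞) (fun p : ℝ × ℝ => u p.1 p.2))
    (hus : ContDiff ℝ (⊤ : ℕ∞) (fun p : ℝ × ℝ => uStar p.1 p.2))
    (hpde : ∀ x ∈ Icc (0:ℝ) 1, ∀ t ∈ Icc (0:ℝ) T,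
      deriv (fun τ => u x τ) t + u x t * deriv (fun ξ => u ξ t) x
        + iteratedDeriv 3 (fun ξ => u ξ t) x
        - iteratedDeriv 5 (fun ξ => u ξ t) x = 0)
    (hhat : ∀ x t, hatu x t = uStar x t - u x t)
    (hRint : ∀ x t, Rint x t =
      deriv (fun τ => uStar x τ) t + uStar x t * deriv (fun ξ => uStar ξ t) x
        + iteratedDeriv 3 (fun ξ => uStar ξ t) x
        - iteratedDeriv 5 (fun ξ => uStar ξ t) x)
    (hRtb : ∀ x, Rtb x = hatu x 0)
    (hRsb1 : ∀ t, Rsb1 t = hatu 0 t)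
    (hRsb2 : ∀ t, Rsb2 t = hatu 1 t)
    (hRsb3 : ∀ t, Rsb3 t = deriv (fun ξ => hatu ξ t) 0)
    (hRsb4 : ∀ t, Rsb4 t = deriv (fun ξ => hatu ξ t) 1)
    (hRsb5 : ∀ t, Rsb5 t = iteratedDeriv 2 (fun ξ => hatu ξ t) 1)
    (hC1 : C1 = mixedNorm 0 4 T u + mixedNorm 0 4 T uStar)
    (hC2 : C2 = (1/2) * mixedNorm 0 0 T u + 1/2)
    (hC3 : C3 = mixedNorm 0 1 T uStar + (1/2) * mixedNorm 0 1 T u + 1/2) :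
    ∀ Tb ∈ Icc (0:ℝ) T,
      (∫ x in (0:ℝ)..1, (hatu x Tb)^2)
        ≤ (1 + 2 * C3 * T * Real.exp (2 * C3 * T)) *
          ((∫ x in (0:ℝ)..1, (Rtb x)^2)
            + 10 * C1 * Real.sqrt T * Real.sqrt
                ((∫ t in (0:ℝ)..T, (Rsb1 t)^2) + (∫ t in (0:ℝ)..T, (Rsb2 t)^2)
                  + (∫ t in (0:ℝ)..T, (Rsb3 t)^2) + (∫ t in (0:ℝ)..T, (Rsb4 t)^2)
                  + (∫ t in (0:ℝ)..T, (Rsb5 t)^2))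
            + 2 * C2 * ((∫ t in (0:ℝ)..T, (Rsb1 t)^2) + (∫ t in (0:ℝ)..T, (Rsb2 t)^2)
                  + (∫ t in (0:ℝ)..T, (Rsb3 t)^2) + (∫ t in (0:ℝ)..T, (Rsb4 t)^2)
                  + (∫ t in (0:ℝ)..T, (Rsb5 t)^2))
            + ∫ t in (0:ℝ)..T, ∫ x in (0:ℝ)..1, (Rint x t)^2) := by
  intro Tb hTbm
  obtain ⟨hTb0, hTbT⟩ := hTbm
  set U : ℝ × ℝ → ℝ := fun p => u p.1 p.2 with hUdef
  set Us : ℝ × ℝ → ℝ := fun p => uStar p.1 p.2 with hUsdef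
  set Uh : ℝ × ℝ → ℝ := fun q => Us q - U q with hUhdef
  have hUh : ContDiff ℝ (⊤ : ℕ∞) Uh := hus.sub hu
  have hUhG : ContDiff ℝ (⊤ : ℕ∞) (fun q => (Uh q)^2) := hUh.pow 2
  -- constants nonneg
  have hC1nn : 0 ≤ C1 := by
    rw [hC1]; exact add_nonneg (mixedNorm_nonneg hu hT.le 4) (mixedNorm_nonneg hus hT.le 4)
  have hC2nn : 0 ≤ C2 := by
    rw [hC2]; have := mixedNorm_nonneg hu hT.le 0; linarith
  have hC3nn : 0 ≤ C3 := by
    rw [hC3]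
    have h1 := mixedNorm_nonneg hu hT.le 1
    have h2 := mixedNorm_nonneg hus hT.le 1
    linarith
  -- time derivative of the energy
  have hE : ∀ τ : ℝ, HasDerivAt (fun σ => ∫ x in (0:ℝ)..1, (Uh (x, σ))^2)
      (∫ x in (0:ℝ)..1, pd2 (fun q => (Uh q)^2) (x, τ)) τ :=
    fun τ => hasDerivAt_param hUhG τ
  have hpd2G : ∀ p : ℝ × ℝ, pd2 (fun q => (Uh q)^2) p = 2 * Uh p * pd2 Uh p := by
    intro p
    have h1 := hasDerivAt_slice2 hUh p.1 p.2
    have h2 := hasDerivAt_slice2 hUhG p.1 p.2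
    have h3 : HasDerivAt (fun τ => (Uh (p.1, τ))^2)
        (2 * Uh (p.1, p.2) * pd2 Uh (p.1, p.2)) p.2 := by
      have h4 := h1.fun_pow 2
      refine h4.congr_deriv ?_
      push_cast
      ring
    have h5 : pd2 (fun q => (Uh q)^2) (p.1, p.2) = 2 * Uh (p.1, p.2) * pd2 Uh (p.1, p.2) :=
      h2.unique h3
    simpa using h5
  -- boundary residuals as continuous formulas
  have hR1 : ∀ s : ℝ, Rsb1 s = Uh (0, s) := by
    intro s; rw [hRsb1 s, hhat 0 s]
  have hR2 : ∀ s : ℝ, Rsb2 s = Uh (1, s) := by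
    intro s; rw [hRsb2 s, hhat 1 s]
  have hslice : ∀ s : ℝ, (fun ξ => hatu ξ s) = (fun ξ => Uh (ξ, s)) :=
    fun s => funext fun ξ => by rw [hhat ξ s]
  have hR3 : ∀ s : ℝ, Rsb3 s = pd1 Uh (0, s) := by
    intro s; rw [hRsb3 s, hslice s, deriv_slice1 hUh s]
  have hR4 : ∀ s : ℝ, Rsb4 s = pd1 Uh (1, s) := by
    intro s; rw [hRsb4 s, hslice s, deriv_slice1 hUh s]
  have hR5 : ∀ s : ℝ, Rsb5 s = pd1^[2] Uh (1, s) := by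
    intro s; rw [hRsb5 s, hslice s]; exact iteratedDeriv_slice1 hUh s 1
  have hRint' : ∀ x s : ℝ, Rint x s
      = pd2 Us (x, s) + Us (x, s) * pd1 Us (x, s) + pd1^[3] Us (x, s) - pd1^[5] Us (x, s) := by
    intro x s
    have e1 : deriv (fun τ => uStar x τ) s = pd2 Us (x, s) := (hasDerivAt_slice2 hus x s).deriv
    have e2 : deriv (fun ξ => uStar ξ s) x = pd1 Us (x, s) := (hasDerivAt_slice1 hus s x).deriv
    have e3 : iteratedDeriv 3 (fun ξ => uStar ξ s) x = pd1^[3] Us (x, s) :=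
      iteratedDeriv_slice1 hus s x
    have e5 : iteratedDeriv 5 (fun ξ => uStar ξ s) x = pd1^[5] Us (x, s) :=
      iteratedDeriv_slice1 hus s x
    have e0 : uStar x s = Us (x, s) := rfl
    rw [hRint x s, e1, e2, e3, e5, e0]
  have hRintC : Continuous (fun p : ℝ × ℝ => Rint p.1 p.2) := by
    have hfe : (fun p : ℝ × ℝ => Rint p.1 p.2)
        = fun p : ℝ × ℝ => pd2 Us p + Us p * pd1 Us p + pd1^[3] Us p - pd1^[5] Us p := by
      funext p
      exact hRint' p.1 p.2
    rw [hfe]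
    exact (((contDiff_pd2 hus).continuous.add
      (hus.continuous.mul (contDiff_pd1 hus).continuous)).add
      (contDiff_pd1_iter hus 3).continuous).sub (contDiff_pd1_iter hus 5).continuous
  -- the forcing function g
  set g : ℝ → ℝ := fun σ => (∫ x in (0:ℝ)..1, (Rint x σ)^2)
      + 2*C2*((Rsb1 σ)^2 + (Rsb2 σ)^2 + (Rsb3 σ)^2 + (Rsb4 σ)^2 + (Rsb5 σ)^2)
      + 2*C1*(2*|Rsb1 σ| + 2*|Rsb2 σ| + |Rsb3 σ| + |Rsb4 σ|) with hgdef
  have hR1C : Continuous Rsb1 := by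
    rw [funext hR1]; exact hUh.continuous.comp (continuous_const.prodMk continuous_id)
  have hR2C : Continuous Rsb2 := by
    rw [funext hR2]; exact hUh.continuous.comp (continuous_const.prodMk continuous_id)
  have hR3C : Continuous Rsb3 := by
    rw [funext hR3]
    exact (contDiff_pd1 hUh).continuous.comp (continuous_const.prodMk continuous_id)
  have hR4C : Continuous Rsb4 := by
    rw [funext hR4]
    exact (contDiff_pd1 hUh).continuous.comp (continuous_const.prodMk continuous_id)
  have hR5C : Continuous Rsb5 := by
    rw [funext hR5]
    exact (contDiff_pd1_iter hUh 2).continuous.comp (continuous_const.prodMk continuous_id)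
  have hIRC : Continuous (fun σ => ∫ x in (0:ℝ)..1, (Rint x σ)^2) := by
    apply intervalIntegral.continuous_parametric_intervalIntegral_of_continuous'
      (μ := MeasureTheory.volume) (f := fun σ x => (Rint x σ)^2)
    exact ((hRintC.comp continuous_swap).pow 2)
  have hgc : Continuous g := by
    rw [hgdef]
    exact (hIRC.add (continuous_const.mul ((((((hR1C.pow 2).add (hR2C.pow 2)).add
        (hR3C.pow 2)).add (hR4C.pow 2)).add (hR5C.pow 2))))).add
      (continuous_const.mul ((((continuous_const.mul hR1C.abs).add
        (continuous_const.mul hR2C.abs)).add hR3C.abs).add hR4C.abs))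
  have hgnn : ∀ σ : ℝ, 0 ≤ g σ := by
    intro σ
    have h1 : 0 ≤ ∫ x in (0:ℝ)..1, (Rint x σ)^2 :=
      intervalIntegral.integral_nonneg zero_le_one (fun x _ => sq_nonneg _)
    have h2 : 0 ≤ 2*C2*((Rsb1 σ)^2 + (Rsb2 σ)^2 + (Rsb3 σ)^2 + (Rsb4 σ)^2 + (Rsb5 σ)^2) := by
      apply mul_nonneg (by linarith); positivity
    have h3 : 0 ≤ 2*C1*(2*|Rsb1 σ| + 2*|Rsb2 σ| + |Rsb3 σ| + |Rsb4 σ|) := by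
      apply mul_nonneg (by linarith); positivity
    simp only [hgdef]; linarith
  -- the key differential inequality
  have hkey : ∀ s ∈ Icc (0:ℝ) T, (∫ x in (0:ℝ)..1, pd2 (fun q => (Uh q)^2) (x, s))
      ≤ 2*C3*(∫ x in (0:ℝ)..1, (Uh (x, s))^2) + g s := by
    intro s hs
    have hws : ContDiff ℝ (⊤ : ℕ∞) (fun y : ℝ => Us (y, s)) := hus.comp (contDiff_id.prodMk contDiff_const)
    have hw : ContDiff ℝ (⊤ : ℕ∞) (fun y : ℝ => U (y, s)) := hu.comp (contDiff_id.prodMk contDiff_const)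
    have hrC : Continuous (fun x => Rint x s) :=
      hRintC.comp (continuous_id.prodMk continuous_const)
    -- bounds for the slice lemma
    have hB1 : ∀ j ≤ 4, ∀ x ∈ Icc (0:ℝ) 1, |iteratedDeriv j (fun y => Uh (y, s)) x| ≤ C1 := by
      intro j hj x hx
      rw [show iteratedDeriv j (fun y => Uh (y, s)) x = pd1^[j] Uh (x, s) from
        iteratedDeriv_slice1 hUh s x,
        show pd1^[j] Uh (x, s) = pd1^[j] Us (x, s) - pd1^[j] U (x, s) from
          congrFun (pd1_iter_sub hus hu) (x, s), hC1]
      have hbs : |pd1^[j] Us (x, s)| ≤ mixedNorm 0 4 T uStar :=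
        abs_le_mixedNorm hus hT.le hj hx hs
      have hbu : |pd1^[j] U (x, s)| ≤ mixedNorm 0 4 T u :=
        abs_le_mixedNorm hu hT.le hj hx hs
      calc |pd1^[j] Us (x, s) - pd1^[j] U (x, s)|
          ≤ |pd1^[j] Us (x, s)| + |pd1^[j] U (x, s)| := abs_sub _ _
        _ ≤ mixedNorm 0 4 T u + mixedNorm 0 4 T uStar := by linarith
    have hB0u : ∀ x ∈ Icc (0:ℝ) 1, |U (x, s)| ≤ mixedNorm 0 0 T u := by
      intro x hx
      exact abs_le_mixedNorm (n := 0) (j := 0) hu hT.le le_rfl hx hs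
    have hB1u : ∀ x ∈ Icc (0:ℝ) 1, |iteratedDeriv 1 (fun y => U (y, s)) x|
        ≤ mixedNorm 0 1 T u := by
      intro x hx
      rw [show iteratedDeriv 1 (fun y => U (y, s)) x = pd1^[1] U (x, s) from
        iteratedDeriv_slice1 hu s x]
      exact abs_le_mixedNorm hu hT.le le_rfl hx hs
    have hB1us : ∀ x ∈ Icc (0:ℝ) 1, |iteratedDeriv 1 (fun y => Us (y, s)) x|
        ≤ mixedNorm 0 1 T uStar := by
      intro x hx
      rw [show iteratedDeriv 1 (fun y => Us (y, s)) x = pd1^[1] Us (x, s) from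
        iteratedDeriv_slice1 hus s x]
      exact abs_le_mixedNorm hus hT.le le_rfl hx hs
    -- the slice estimate
    have hsb := slice_bound (fun y => U (y, s)) (fun y => Us (y, s)) (fun y => Rint y s)
      (fun y => Uh (y, s)) hw hws hrC rfl C1 (mixedNorm 0 0 T u) (mixedNorm 0 1 T u)
      (mixedNorm 0 1 T uStar) hB1 hB0u hB1u hB1us
    beta_reduce at hsb
    -- identify the integrand
    have hpt : ∀ x ∈ uIcc (0:ℝ) 1, 2 * Uh (x, s) * pd2 Uh (x, s)
        = 2 * Uh (x, s) * (Rint x s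
            - (Us (x, s) * iteratedDeriv 1 (fun y => Us (y, s)) x
               - U (x, s) * iteratedDeriv 1 (fun y => U (y, s)) x)
            - iteratedDeriv 3 (fun y => Uh (y, s)) x
            + iteratedDeriv 5 (fun y => Uh (y, s)) x) := by
      intro x hx
      rw [Set.uIcc_of_le (by norm_num : (0:ℝ) ≤ 1)] at hx
      have hsub2 : pd2 Uh (x, s) = pd2 Us (x, s) - pd2 U (x, s) :=
        congrFun (pd2_sub hus hu) (x, s)
      have hUs_eq : pd2 Us (x, s) = Rint x s - Us (x, s) * pd1 Us (x, s)
          - pd1^[3] Us (x, s) + pd1^[5] Us (x, s) := by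
        have := hRint' x s
        linarith
      have hU_eq : pd2 U (x, s) = -(U (x, s) * pd1 U (x, s))
          - pd1^[3] U (x, s) + pd1^[5] U (x, s) := by
        have h := hpde x hx s hs
        have e1 : deriv (fun τ => u x τ) s = pd2 U (x, s) := (hasDerivAt_slice2 hu x s).deriv
        have e2 : deriv (fun ξ => u ξ s) x = pd1 U (x, s) := (hasDerivAt_slice1 hu s x).deriv
        have e3 : iteratedDeriv 3 (fun ξ => u ξ s) x = pd1^[3] U (x, s) :=
          iteratedDeriv_slice1 hu s x
        have e5 : iteratedDeriv 5 (fun ξ => u ξ s) x = pd1^[5] U (x, s) :=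
          iteratedDeriv_slice1 hu s x
        have e0 : u x s = U (x, s) := rfl
        rw [e1, e2, e3, e5, e0] at h
        linarith
      have e3h : iteratedDeriv 3 (fun y => Uh (y, s)) x
          = pd1^[3] Us (x, s) - pd1^[3] U (x, s) := by
        rw [show iteratedDeriv 3 (fun y => Uh (y, s)) x = pd1^[3] Uh (x, s) from
          iteratedDeriv_slice1 hUh s x]
        exact congrFun (pd1_iter_sub hus hu) (x, s)
      have e5h : iteratedDeriv 5 (fun y => Uh (y, s)) x
          = pd1^[5] Us (x, s) - pd1^[5] U (x, s) := by
        rw [show iteratedDeriv 5 (fun y => Uh (y, s)) x = pd1^[5] Uh (x, s) from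
          iteratedDeriv_slice1 hUh s x]
        exact congrFun (pd1_iter_sub hus hu) (x, s)
      have e1ws : iteratedDeriv 1 (fun y => Us (y, s)) x = pd1 Us (x, s) :=
        iteratedDeriv_slice1 hus s x
      have e1w : iteratedDeriv 1 (fun y => U (y, s)) x = pd1 U (x, s) :=
        iteratedDeriv_slice1 hu s x
      rw [hsub2, hUs_eq, hU_eq, e3h, e5h, e1ws, e1w]
      ring
    have hcong : (∫ x in (0:ℝ)..1, pd2 (fun q => (Uh q)^2) (x, s))
        = ∫ x in (0:ℝ)..1, 2 * Uh (x, s) * pd2 Uh (x, s) :=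
      intervalIntegral.integral_congr (fun x _ => hpd2G (x, s))
    have hcong2 : (∫ x in (0:ℝ)..1, 2 * Uh (x, s) * pd2 Uh (x, s))
        = ∫ x in (0:ℝ)..1, 2 * Uh (x, s) * (Rint x s
            - (Us (x, s) * iteratedDeriv 1 (fun y => Us (y, s)) x
               - U (x, s) * iteratedDeriv 1 (fun y => U (y, s)) x)
            - iteratedDeriv 3 (fun y => Uh (y, s)) x
            + iteratedDeriv 5 (fun y => Uh (y, s)) x) :=
      intervalIntegral.integral_congr hpt
    rw [hcong, hcong2]
    -- boundary values
    have b1 : Uh (0, s) = Rsb1 s := (hR1 s).symm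
    have b2 : Uh (1, s) = Rsb2 s := (hR2 s).symm
    have b3 : iteratedDeriv 1 (fun y => Uh (y, s)) 0 = Rsb3 s := by
      rw [show iteratedDeriv 1 (fun y => Uh (y, s)) 0 = pd1 Uh (0, s) from
        iteratedDeriv_slice1 hUh s 0]
      exact (hR3 s).symm
    have b4 : iteratedDeriv 1 (fun y => Uh (y, s)) 1 = Rsb4 s := by
      rw [show iteratedDeriv 1 (fun y => Uh (y, s)) 1 = pd1 Uh (1, s) from
        iteratedDeriv_slice1 hUh s 1]
      exact (hR4 s).symm
    have b5 : iteratedDeriv 2 (fun y => Uh (y, s)) 1 = Rsb5 s := by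
      rw [show iteratedDeriv 2 (fun y => Uh (y, s)) 1 = pd1^[2] Uh (1, s) from
        iteratedDeriv_slice1 hUh s 1]
      exact (hR5 s).symm
    rw [b1, b2, b3, b4, b5] at hsb
    have h2C3 : 1 + 2 * mixedNorm 0 1 T uStar + mixedNorm 0 1 T u = 2*C3 := by
      rw [hC3]; ring
    have hN0u : 0 ≤ mixedNorm 0 0 T u := mixedNorm_nonneg hu hT.le 0
    have hquad : mixedNorm 0 0 T u * ((Rsb1 s)^2 + (Rsb2 s)^2) + (Rsb4 s)^2 + (Rsb5 s)^2
        ≤ 2*C2*((Rsb1 s)^2 + (Rsb2 s)^2 + (Rsb3 s)^2 + (Rsb4 s)^2 + (Rsb5 s)^2) := by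
      rw [hC2]
      nlinarith [mul_nonneg hN0u (sq_nonneg (Rsb3 s)), mul_nonneg hN0u (sq_nonneg (Rsb4 s)),
        mul_nonneg hN0u (sq_nonneg (Rsb5 s)), sq_nonneg (Rsb1 s), sq_nonneg (Rsb2 s),
        sq_nonneg (Rsb3 s)]
    rw [hgdef]
    have hgs : (fun σ => (∫ x in (0:ℝ)..1, (Rint x σ)^2)
        + 2*C2*((Rsb1 σ)^2 + (Rsb2 σ)^2 + (Rsb3 σ)^2 + (Rsb4 σ)^2 + (Rsb5 σ)^2)
        + 2*C1*(2*|Rsb1 σ| + 2*|Rsb2 σ| + |Rsb3 σ| + |Rsb4 σ|)) s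
        = (∫ x in (0:ℝ)..1, (Rint x s)^2)
        + 2*C2*((Rsb1 s)^2 + (Rsb2 s)^2 + (Rsb3 s)^2 + (Rsb4 s)^2 + (Rsb5 s)^2)
        + 2*C1*(2*|Rsb1 s| + 2*|Rsb2 s| + |Rsb3 s| + |Rsb4 s|) := rfl
    rw [hgs]
    rw [h2C3] at hsb
    linarith [hsb, hquad]
  -- Gronwall
  have hgron : (∫ x in (0:ℝ)..1, (Uh (x, Tb))^2)
      ≤ Real.exp (2*C3*Tb) * ((∫ x in (0:ℝ)..1, (Uh (x, 0))^2) + ∫ σ in (0:ℝ)..Tb, g σ) := by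
    set E : ℝ → ℝ := fun σ => ∫ x in (0:ℝ)..1, (Uh (x, σ))^2 with hEdef
    set E' : ℝ → ℝ := fun σ => ∫ x in (0:ℝ)..1, pd2 (fun q => (Uh q)^2) (x, σ) with hE'def
    have hgE : Continuous fun σ => Real.exp (-(2*C3)*σ) * g σ :=
      ((Real.continuous_exp.comp (continuous_const.mul continuous_id)).mul hgc)
    set φ : ℝ → ℝ := fun σ => Real.exp (-(2*C3)*σ) * E σ
        - ∫ σ' in (0:ℝ)..σ, Real.exp (-(2*C3)*σ') * g σ' with hφdef
    have hExp : ∀ σ : ℝ, HasDerivAt (fun σ => Real.exp (-(2*C3)*σ))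
        (-(2*C3) * Real.exp (-(2*C3)*σ)) σ := by
      intro σ
      have h1 : HasDerivAt (fun σ : ℝ => -(2*C3)*σ) (-(2*C3)) σ := by
        simpa using (hasDerivAt_id σ).const_mul (-(2*C3))
      have h2 := h1.exp
      convert h2 using 1
      ring
    have hφd : ∀ σ : ℝ, HasDerivAt φ (-(2*C3) * Real.exp (-(2*C3)*σ) * E σ
        + Real.exp (-(2*C3)*σ) * E' σ - Real.exp (-(2*C3)*σ) * g σ) σ := by
      intro σ
      have h2 := (hExp σ).mul (hE σ)
      have h3 : HasDerivAt (fun σ => ∫ σ' in (0:ℝ)..σ, Real.exp (-(2*C3)*σ') * g σ')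
          (Real.exp (-(2*C3)*σ) * g σ) σ :=
        intervalIntegral.integral_hasDerivAt_right (hgE.intervalIntegrable 0 σ)
          (hgE.stronglyMeasurableAtFilter _ _) hgE.continuousAt
      exact h2.sub h3
    have hanti : AntitoneOn φ (Icc 0 Tb) := by
      apply antitoneOn_of_deriv_nonpos (convex_Icc 0 Tb)
      · exact (continuous_iff_continuousAt.mpr fun σ => (hφd σ).continuousAt).continuousOn
      · intro σ _
        exact (hφd σ).differentiableAt.differentiableWithinAt
      · intro σ hσ
        rw [interior_Icc] at hσ
        rw [(hφd σ).deriv]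
        have hmem : σ ∈ Icc (0:ℝ) T := ⟨hσ.1.le, hσ.2.le.trans hTbT⟩
        have hk := hkey σ hmem
        have hexp_pos : (0:ℝ) < Real.exp (-(2*C3)*σ) := Real.exp_pos _
        have hmul := mul_le_mul_of_nonneg_left hk hexp_pos.le
        nlinarith [hmul]
    have hfin : φ Tb ≤ φ 0 := hanti ⟨le_rfl, hTb0⟩ ⟨hTb0, le_rfl⟩ hTb0
    have hφ0 : φ 0 = E 0 := by
      rw [hφdef]
      simp
    have hIg : (∫ σ' in (0:ℝ)..Tb, Real.exp (-(2*C3)*σ') * g σ')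
        ≤ ∫ σ' in (0:ℝ)..Tb, g σ' := by
      apply intervalIntegral.integral_mono_on hTb0 (hgE.intervalIntegrable 0 Tb)
        (hgc.intervalIntegrable 0 Tb)
      intro σ hσ
      have he1 : Real.exp (-(2*C3)*σ) ≤ 1 := by
        rw [Real.exp_le_one_iff]
        have := hσ.1
        nlinarith [hC3nn]
      calc Real.exp (-(2*C3)*σ) * g σ ≤ 1 * g σ :=
            mul_le_mul_of_nonneg_right he1 (hgnn σ)
        _ = g σ := one_mul _
    have h5 : Real.exp (-(2*C3)*Tb) * E Tb ≤ E 0 + ∫ σ' in (0:ℝ)..Tb, g σ' := by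
      rw [hφ0] at hfin
      simp only [hφdef] at hfin
      linarith
    have h6 := mul_le_mul_of_nonneg_left h5 (Real.exp_pos (2*C3*Tb)).le
    rw [← mul_assoc, ← Real.exp_add] at h6
    have : (2*C3*Tb + -(2*C3)*Tb) = 0 := by ring
    rw [this, Real.exp_zero, one_mul] at h6
    exact h6
  -- final assembly
  set S1 := ∫ t in (0:ℝ)..T, (Rsb1 t)^2 with hS1def
  set S2 := ∫ t in (0:ℝ)..T, (Rsb2 t)^2 with hS2def
  set S3 := ∫ t in (0:ℝ)..T, (Rsb3 t)^2 with hS3def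
  set S4 := ∫ t in (0:ℝ)..T, (Rsb4 t)^2 with hS4def
  set S5 := ∫ t in (0:ℝ)..T, (Rsb5 t)^2 with hS5def
  have hS1nn : 0 ≤ S1 := intervalIntegral.integral_nonneg hT.le (fun _ _ => sq_nonneg _)
  have hS2nn : 0 ≤ S2 := intervalIntegral.integral_nonneg hT.le (fun _ _ => sq_nonneg _)
  have hS3nn : 0 ≤ S3 := intervalIntegral.integral_nonneg hT.le (fun _ _ => sq_nonneg _)
  have hS4nn : 0 ≤ S4 := intervalIntegral.integral_nonneg hT.le (fun _ _ => sq_nonneg _)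
  have hS5nn : 0 ≤ S5 := intervalIntegral.integral_nonneg hT.le (fun _ _ => sq_nonneg _)
  have hLHS : (∫ x in (0:ℝ)..1, (hatu x Tb)^2) = ∫ x in (0:ℝ)..1, (Uh (x, Tb))^2 :=
    intervalIntegral.integral_congr (fun x _ => by rw [hhat x Tb])
  have hE0 : (∫ x in (0:ℝ)..1, (Rtb x)^2) = ∫ x in (0:ℝ)..1, (Uh (x, 0))^2 :=
    intervalIntegral.integral_congr (fun x _ => by rw [hRtb x, hhat x 0])
  -- continuity of pieces of g
  have cQ : Continuous (fun σ => (Rsb1 σ)^2 + (Rsb2 σ)^2 + (Rsb3 σ)^2 + (Rsb4 σ)^2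
      + (Rsb5 σ)^2) := ((((hR1C.pow 2).add (hR2C.pow 2)).add (hR3C.pow 2)).add
      (hR4C.pow 2)).add (hR5C.pow 2)
  have cL : Continuous (fun σ => 2*|Rsb1 σ| + 2*|Rsb2 σ| + |Rsb3 σ| + |Rsb4 σ|) :=
    (((continuous_const.mul hR1C.abs).add (continuous_const.mul hR2C.abs)).add
      hR3C.abs).add hR4C.abs
  -- split ∫₀ᵀᵇ g
  have hEGsplit : (∫ σ in (0:ℝ)..Tb, g σ)
      = (∫ σ in (0:ℝ)..Tb, ∫ x in (0:ℝ)..1, (Rint x σ)^2)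
        + 2*C2*(∫ σ in (0:ℝ)..Tb, ((Rsb1 σ)^2 + (Rsb2 σ)^2 + (Rsb3 σ)^2 + (Rsb4 σ)^2
            + (Rsb5 σ)^2))
        + 2*C1*(∫ σ in (0:ℝ)..Tb, (2*|Rsb1 σ| + 2*|Rsb2 σ| + |Rsb3 σ| + |Rsb4 σ|)) := by
    simp only [hgdef]
    rw [intervalIntegral.integral_add ((hIRC.intervalIntegrable 0 Tb).add
        ((continuous_const.fun_mul cQ).intervalIntegrable 0 Tb))
        ((continuous_const.fun_mul cL).intervalIntegrable 0 Tb),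
      intervalIntegral.integral_add (hIRC.intervalIntegrable 0 Tb)
        ((continuous_const.fun_mul cQ).intervalIntegrable 0 Tb),
      intervalIntegral.integral_const_mul, intervalIntegral.integral_const_mul]
  -- bound each piece
  have hg1 : (∫ σ in (0:ℝ)..Tb, ∫ x in (0:ℝ)..1, (Rint x σ)^2)
      ≤ ∫ σ in (0:ℝ)..T, ∫ x in (0:ℝ)..1, (Rint x σ)^2 :=
    integral_mono_interval_nonneg hIRC
      (fun σ => intervalIntegral.integral_nonneg zero_le_one (fun x _ => sq_nonneg _))
      hTb0 hTbT
  have hg2 : (∫ σ in (0:ℝ)..Tb, ((Rsb1 σ)^2 + (Rsb2 σ)^2 + (Rsb3 σ)^2 + (Rsb4 σ)^2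
        + (Rsb5 σ)^2)) ≤ S1 + S2 + S3 + S4 + S5 := by
    have h1 : (∫ σ in (0:ℝ)..Tb, ((Rsb1 σ)^2 + (Rsb2 σ)^2 + (Rsb3 σ)^2 + (Rsb4 σ)^2
        + (Rsb5 σ)^2)) ≤ ∫ σ in (0:ℝ)..T, ((Rsb1 σ)^2 + (Rsb2 σ)^2 + (Rsb3 σ)^2
        + (Rsb4 σ)^2 + (Rsb5 σ)^2) :=
      integral_mono_interval_nonneg cQ (fun σ => by positivity) hTb0 hTbT
    have h2 : (∫ σ in (0:ℝ)..T, ((Rsb1 σ)^2 + (Rsb2 σ)^2 + (Rsb3 σ)^2 + (Rsb4 σ)^2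
        + (Rsb5 σ)^2)) = S1 + S2 + S3 + S4 + S5 := by
      rw [intervalIntegral.integral_add (((((hR1C.fun_pow 2).fun_add (hR2C.fun_pow 2)).fun_add
            (hR3C.fun_pow 2)).fun_add (hR4C.fun_pow 2)).intervalIntegrable 0 T)
          ((hR5C.fun_pow 2).intervalIntegrable 0 T),
        intervalIntegral.integral_add ((((hR1C.fun_pow 2).fun_add (hR2C.fun_pow 2)).fun_add
            (hR3C.fun_pow 2)).intervalIntegrable 0 T) ((hR4C.fun_pow 2).intervalIntegrable 0 T),
        intervalIntegral.integral_add (((hR1C.fun_pow 2).fun_add (hR2C.fun_pow 2)).intervalIntegrable 0 T)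
          ((hR3C.fun_pow 2).intervalIntegrable 0 T),
        intervalIntegral.integral_add ((hR1C.fun_pow 2).intervalIntegrable 0 T)
          ((hR2C.fun_pow 2).intervalIntegrable 0 T)]
    linarith
  have hg3 : (∫ σ in (0:ℝ)..Tb, (2*|Rsb1 σ| + 2*|Rsb2 σ| + |Rsb3 σ| + |Rsb4 σ|))
      ≤ Real.sqrt T * (5 * Real.sqrt (S1 + S2 + S3 + S4 + S5)) := by
    have h1 : (∫ σ in (0:ℝ)..Tb, (2*|Rsb1 σ| + 2*|Rsb2 σ| + |Rsb3 σ| + |Rsb4 σ|))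
        ≤ ∫ σ in (0:ℝ)..T, (2*|Rsb1 σ| + 2*|Rsb2 σ| + |Rsb3 σ| + |Rsb4 σ|) :=
      integral_mono_interval_nonneg cL (fun σ => by positivity) hTb0 hTbT
    have h2 : (∫ σ in (0:ℝ)..T, (2*|Rsb1 σ| + 2*|Rsb2 σ| + |Rsb3 σ| + |Rsb4 σ|))
        = 2*(∫ σ in (0:ℝ)..T, |Rsb1 σ|) + 2*(∫ σ in (0:ℝ)..T, |Rsb2 σ|)
          + (∫ σ in (0:ℝ)..T, |Rsb3 σ|) + (∫ σ in (0:ℝ)..T, |Rsb4 σ|) := by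
      rw [intervalIntegral.integral_add ((((continuous_const.fun_mul hR1C.abs).fun_add
            (continuous_const.fun_mul hR2C.abs)).fun_add hR3C.abs).intervalIntegrable 0 T)
          (hR4C.abs.intervalIntegrable 0 T),
        intervalIntegral.integral_add (((continuous_const.fun_mul hR1C.abs).fun_add
            (continuous_const.fun_mul hR2C.abs)).intervalIntegrable 0 T)
          (hR3C.abs.intervalIntegrable 0 T),
        intervalIntegral.integral_add ((continuous_const.fun_mul hR1C.abs).intervalIntegrable 0 T)
          ((continuous_const.fun_mul hR2C.abs).intervalIntegrable 0 T),
        intervalIntegral.integral_const_mul, intervalIntegral.integral_const_mul]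
    have cs1 : (∫ σ in (0:ℝ)..T, |Rsb1 σ|) ≤ Real.sqrt T * Real.sqrt S1 :=
      integral_abs_le_sqrt hT.le hR1C
    have cs2 : (∫ σ in (0:ℝ)..T, |Rsb2 σ|) ≤ Real.sqrt T * Real.sqrt S2 :=
      integral_abs_le_sqrt hT.le hR2C
    have cs3 : (∫ σ in (0:ℝ)..T, |Rsb3 σ|) ≤ Real.sqrt T * Real.sqrt S3 :=
      integral_abs_le_sqrt hT.le hR3C
    have cs4 : (∫ σ in (0:ℝ)..T, |Rsb4 σ|) ≤ Real.sqrt T * Real.sqrt S4 :=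
      integral_abs_le_sqrt hT.le hR4C
    have hlag := lagrange4 (Real.sqrt_nonneg S1) (Real.sqrt_nonneg S2)
      (Real.sqrt_nonneg S3) (Real.sqrt_nonneg S4)
    rw [Real.sq_sqrt hS1nn, Real.sq_sqrt hS2nn, Real.sq_sqrt hS3nn, Real.sq_sqrt hS4nn] at hlag
    have hmon : Real.sqrt (S1 + S2 + S3 + S4) ≤ Real.sqrt (S1 + S2 + S3 + S4 + S5) :=
      Real.sqrt_le_sqrt (by linarith)
    have h10 : Real.sqrt 10 ≤ 5 := by
      nlinarith [Real.sq_sqrt (show (0:ℝ) ≤ 10 by norm_num), Real.sqrt_nonneg 10]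
    have h5b : Real.sqrt 10 * Real.sqrt (S1 + S2 + S3 + S4)
        ≤ 5 * Real.sqrt (S1 + S2 + S3 + S4 + S5) :=
      mul_le_mul h10 hmon (Real.sqrt_nonneg _) (by norm_num)
    have hfac : 2*(Real.sqrt T * Real.sqrt S1) + 2*(Real.sqrt T * Real.sqrt S2)
        + (Real.sqrt T * Real.sqrt S3) + (Real.sqrt T * Real.sqrt S4)
        = Real.sqrt T * (2*Real.sqrt S1 + 2*Real.sqrt S2 + Real.sqrt S3 + Real.sqrt S4) := by
      ring
    have hmul : Real.sqrt T * (2*Real.sqrt S1 + 2*Real.sqrt S2 + Real.sqrt S3 + Real.sqrt S4)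
        ≤ Real.sqrt T * (5 * Real.sqrt (S1 + S2 + S3 + S4 + S5)) :=
      mul_le_mul_of_nonneg_left (by linarith) (Real.sqrt_nonneg T)
    calc (∫ σ in (0:ℝ)..Tb, (2*|Rsb1 σ| + 2*|Rsb2 σ| + |Rsb3 σ| + |Rsb4 σ|))
        ≤ ∫ σ in (0:ℝ)..T, (2*|Rsb1 σ| + 2*|Rsb2 σ| + |Rsb3 σ| + |Rsb4 σ|) := h1
      _ = 2*(∫ σ in (0:ℝ)..T, |Rsb1 σ|) + 2*(∫ σ in (0:ℝ)..T, |Rsb2 σ|)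
          + (∫ σ in (0:ℝ)..T, |Rsb3 σ|) + (∫ σ in (0:ℝ)..T, |Rsb4 σ|) := h2
      _ ≤ 2*(Real.sqrt T * Real.sqrt S1) + 2*(Real.sqrt T * Real.sqrt S2)
          + (Real.sqrt T * Real.sqrt S3) + (Real.sqrt T * Real.sqrt S4) := by linarith
      _ = Real.sqrt T * (2*Real.sqrt S1 + 2*Real.sqrt S2 + Real.sqrt S3 + Real.sqrt S4) := hfac
      _ ≤ Real.sqrt T * (5 * Real.sqrt (S1 + S2 + S3 + S4 + S5)) := hmul
  -- assemble D bound
  have hEGnn : 0 ≤ ∫ σ in (0:ℝ)..Tb, g σ :=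
    intervalIntegral.integral_nonneg hTb0 (fun σ _ => hgnn σ)
  have hE0nn : 0 ≤ ∫ x in (0:ℝ)..1, (Uh (x, 0))^2 :=
    intervalIntegral.integral_nonneg zero_le_one (fun _ _ => sq_nonneg _)
  have hITnn : 0 ≤ ∫ σ in (0:ℝ)..T, ∫ x in (0:ℝ)..1, (Rint x σ)^2 :=
    intervalIntegral.integral_nonneg hT.le
      (fun σ _ => intervalIntegral.integral_nonneg zero_le_one (fun x _ => sq_nonneg _))
  have hSBnn : 0 ≤ S1 + S2 + S3 + S4 + S5 := by linarith
  have h2C2EG : 2*C2*(∫ σ in (0:ℝ)..Tb, ((Rsb1 σ)^2 + (Rsb2 σ)^2 + (Rsb3 σ)^2 + (Rsb4 σ)^2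
        + (Rsb5 σ)^2)) ≤ 2*C2*(S1 + S2 + S3 + S4 + S5) :=
    mul_le_mul_of_nonneg_left hg2 (by linarith)
  have h2C1EG : 2*C1*(∫ σ in (0:ℝ)..Tb, (2*|Rsb1 σ| + 2*|Rsb2 σ| + |Rsb3 σ| + |Rsb4 σ|))
      ≤ 10 * C1 * Real.sqrt T * Real.sqrt (S1 + S2 + S3 + S4 + S5) := by
    calc 2*C1*(∫ σ in (0:ℝ)..Tb, (2*|Rsb1 σ| + 2*|Rsb2 σ| + |Rsb3 σ| + |Rsb4 σ|))
        ≤ 2*C1*(Real.sqrt T * (5 * Real.sqrt (S1 + S2 + S3 + S4 + S5))) :=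
          mul_le_mul_of_nonneg_left hg3 (by linarith)
      _ = 10 * C1 * Real.sqrt T * Real.sqrt (S1 + S2 + S3 + S4 + S5) := by ring
  have hD1 : (∫ x in (0:ℝ)..1, (Uh (x, 0))^2) + (∫ σ in (0:ℝ)..Tb, g σ)
      ≤ (∫ x in (0:ℝ)..1, (Rtb x)^2)
        + 10 * C1 * Real.sqrt T * Real.sqrt (S1 + S2 + S3 + S4 + S5)
        + 2 * C2 * (S1 + S2 + S3 + S4 + S5)
        + ∫ σ in (0:ℝ)..T, ∫ x in (0:ℝ)..1, (Rint x σ)^2 := by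
    rw [hE0, hEGsplit]
    linarith
  have hDnn : 0 ≤ (∫ x in (0:ℝ)..1, (Rtb x)^2)
      + 10 * C1 * Real.sqrt T * Real.sqrt (S1 + S2 + S3 + S4 + S5)
      + 2 * C2 * (S1 + S2 + S3 + S4 + S5)
      + ∫ σ in (0:ℝ)..T, ∫ x in (0:ℝ)..1, (Rint x σ)^2 := by
    have h1 : 0 ≤ (∫ x in (0:ℝ)..1, (Rtb x)^2) :=
      intervalIntegral.integral_nonneg zero_le_one (fun _ _ => sq_nonneg _)
    have h2 : 0 ≤ 10 * C1 * Real.sqrt T * Real.sqrt (S1 + S2 + S3 + S4 + S5) := by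
      have := Real.sqrt_nonneg T
      have := Real.sqrt_nonneg (S1 + S2 + S3 + S4 + S5)
      positivity
    have h3 : 0 ≤ 2 * C2 * (S1 + S2 + S3 + S4 + S5) := by positivity
    linarith
  have hexp_le : Real.exp (2*C3*T) ≤ 1 + 2 * C3 * T * Real.exp (2 * C3 * T) := by
    have hx : 0 ≤ 2*C3*T := by positivity
    have := exp_le_one_add_mul_exp hx
    linarith
  rw [hLHS]
  calc (∫ x in (0:ℝ)..1, (Uh (x, Tb))^2)
      ≤ Real.exp (2*C3*Tb) * ((∫ x in (0:ℝ)..1, (Uh (x, 0))^2) + ∫ σ in (0:ℝ)..Tb, g σ) :=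
        hgron
    _ ≤ Real.exp (2*C3*T) * ((∫ x in (0:ℝ)..1, (Uh (x, 0))^2) + ∫ σ in (0:ℝ)..Tb, g σ) := by
        apply mul_le_mul_of_nonneg_right _ (by linarith)
        apply Real.exp_le_exp.mpr
        nlinarith [hC3nn, hTbT]
    _ ≤ Real.exp (2*C3*T) * ((∫ x in (0:ℝ)..1, (Rtb x)^2)
          + 10 * C1 * Real.sqrt T * Real.sqrt (S1 + S2 + S3 + S4 + S5)
          + 2 * C2 * (S1 + S2 + S3 + S4 + S5)
          + ∫ σ in (0:ℝ)..T, ∫ x in (0:ℝ)..1, (Rint x σ)^2) :=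
        mul_le_mul_of_nonneg_left hD1 (Real.exp_pos _).le
    _ ≤ (1 + 2 * C3 * T * Real.exp (2 * C3 * T)) * ((∫ x in (0:ℝ)..1, (Rtb x)^2)
          + 10 * C1 * Real.sqrt T * Real.sqrt (S1 + S2 + S3 + S4 + S5)
          + 2 * C2 * (S1 + S2 + S3 + S4 + S5)
          + ∫ σ in (0:ℝ)..T, ∫ x in (0:ℝ)..1, (Rint x σ)^2) :=
        mul_le_mul_of_nonneg_right hexp_le hDnn
end

section
/- The function u(x,t) = (105/169) sech⁴((1/(2√13))(x − (205/169)t)) is a classical solution of the Kawahara-type equation u_t + u_x + u u_x + u_xxx − u_xxxxx = 0 on ℝ × ℝ. -/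
/-!
For a travelling wave `u x t = φ (x - c t)` the left-hand side of the equation is the derivative of
`(1 - c) φ + φ² / 2 + φ'' - φ''''`, so it suffices that this first integral vanishes. For
`φ ξ = A sech⁴ (k ξ)` the identity `(sechⁿ)'' = n² sechⁿ - n (n + 1) sechⁿ⁺²` turns it into a
combination of `sech⁴`, `sech⁶`, `sech⁸`, whose coefficients vanish exactly when `k² = 1/52`,
`A = 1680 k⁴` and `c = 1 + 16 k² - 256 k⁴`.
-/

open Real

theorem hasDerivAt_inv_cosh_pow (n : ℕ) (y : ℝ) :
    HasDerivAt (fun y => (cosh y)⁻¹ ^ n) (-n * sinh y / cosh y ^ (n + 1)) y := by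
  have hc := (cosh_pos y).ne'
  refine (((hasDerivAt_cosh y).fun_inv hc).fun_pow n).congr_deriv ?_
  rcases n with _ | n
  · simp
  · rw [Nat.add_sub_cancel, inv_pow]
    field_simp
    ring

theorem hasDerivAt_sinh_div_cosh_pow (n : ℕ) (y : ℝ) :
    HasDerivAt (fun y => sinh y / cosh y ^ (n + 1))
      ((n + 1) * (cosh y)⁻¹ ^ (n + 2) - n * (cosh y)⁻¹ ^ n) y := by
  have hc := (cosh_pos y).ne'
  refine ((hasDerivAt_sinh y).fun_div ((hasDerivAt_cosh y).fun_pow (n + 1))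
    (pow_ne_zero _ hc)).congr_deriv ?_
  rw [Nat.add_sub_cancel, inv_pow, inv_pow]
  field_simp
  push_cast
  linear_combination (↑n + 1) * cosh y ^ (3 * n + 2) * cosh_sq y

theorem contDiff_inv_cosh_pow {m : WithTop ℕ∞} (n : ℕ) :
    ContDiff ℝ m (fun y => (cosh y)⁻¹ ^ n) :=
  (contDiff_cosh.inv fun y => (cosh_pos y).ne').pow n

theorem iteratedDeriv_two_inv_cosh_pow (n : ℕ) :
    iteratedDeriv 2 (fun y => (cosh y)⁻¹ ^ n) =
      fun y => n ^ 2 * (cosh y)⁻¹ ^ n - n * (n + 1) * (cosh y)⁻¹ ^ (n + 2) := by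
  have h₁ : deriv (fun y => (cosh y)⁻¹ ^ n) = fun y => -n * (sinh y / cosh y ^ (n + 1)) := by
    funext y
    rw [(hasDerivAt_inv_cosh_pow n y).deriv, mul_div_assoc]
  funext y
  rw [iteratedDeriv_succ, iteratedDeriv_one, h₁, deriv_const_mul_field,
    (hasDerivAt_sinh_div_cosh_pow n y).deriv]
  ring

theorem iteratedDeriv_four_inv_cosh_pow_four :
    iteratedDeriv 4 (fun y => (cosh y)⁻¹ ^ 4) =
      fun y => 256 * (cosh y)⁻¹ ^ 4 - 1040 * (cosh y)⁻¹ ^ 6 + 840 * (cosh y)⁻¹ ^ 8 := by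
  funext y
  rw [iteratedDeriv_eq_iterate, show 4 = 2 + 2 from rfl, Function.iterate_add_apply,
    ← iteratedDeriv_eq_iterate, ← iteratedDeriv_eq_iterate, iteratedDeriv_two_inv_cosh_pow,
    iteratedDeriv_fun_sub (contDiff_const.mul (contDiff_inv_cosh_pow 4)).contDiffAt
      (contDiff_const.mul (contDiff_inv_cosh_pow 6)).contDiffAt,
    iteratedDeriv_const_mul_field, iteratedDeriv_const_mul_field,
    iteratedDeriv_two_inv_cosh_pow, iteratedDeriv_two_inv_cosh_pow]
  norm_num
  ring

noncomputable def kawaharaOperator (u : ℝ → ℝ → ℝ) (x t : ℝ) : ℝ :=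
  deriv (fun τ => u x τ) t + deriv (fun ξ => u ξ t) x
    + u x t * deriv (fun ξ => u ξ t) x
    + iteratedDeriv 3 (fun ξ => u ξ t) x
    - iteratedDeriv 5 (fun ξ => u ξ t) x

theorem kawaharaOperator_travelingWave_eq_zero {φ : ℝ → ℝ} (hφ : ContDiff ℝ 5 φ) (c : ℝ)
    (hode : ∀ ξ, (1 - c) * φ ξ + φ ξ ^ 2 / 2 + iteratedDeriv 2 φ ξ - iteratedDeriv 4 φ ξ = 0)
    (x t : ℝ) : kawaharaOperator (fun x t => φ (x - c * t)) x t = 0 := by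
  set ξ := x - c * t
  have hderiv (m : ℕ) (hm : m < 5) (y : ℝ) :
      HasDerivAt (iteratedDeriv m φ) (iteratedDeriv (m + 1) φ y) y := by
    rw [iteratedDeriv_succ]
    exact ((hφ.differentiable_iteratedDeriv m (by exact_mod_cast hm)) y).hasDerivAt
  have hφ' : HasDerivAt φ (deriv φ ξ) ξ := by
    simpa using hderiv 0 (by norm_num) ξ
  have hwave : (1 - c) * deriv φ ξ + φ ξ * deriv φ ξ + iteratedDeriv 3 φ ξ
      - iteratedDeriv 5 φ ξ = 0 := by
    have hF : HasDerivAt (fun y => (1 - c) * φ y + φ y ^ 2 / 2 + iteratedDeriv 2 φ y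
        - iteratedDeriv 4 φ y) ((1 - c) * deriv φ ξ + φ ξ * deriv φ ξ + iteratedDeriv 3 φ ξ
        - iteratedDeriv 5 φ ξ) ξ := by
      refine ((((hφ'.const_mul (1 - c)).fun_add ((hφ'.fun_pow 2).div_const 2)).fun_add
        (hderiv 2 (by norm_num) ξ)).fun_sub (hderiv 4 (by norm_num) ξ)).congr_deriv ?_
      norm_num
      ring
    rw [funext hode] at hF
    exact hF.unique (hasDerivAt_const ξ 0)
  have ht : deriv (fun τ => φ (x - c * τ)) t = -c * deriv φ ξ := by
    have hξ : HasDerivAt (fun τ => x - c * τ) (-c) t := by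
      simpa using ((hasDerivAt_id t).const_mul c).const_sub x
    exact (hφ'.comp t hξ).deriv.trans (mul_comm _ _)
  simp only [kawaharaOperator, ht, deriv_comp_sub_const, iteratedDeriv_comp_sub_const]
  linear_combination hwave

noncomputable def kawaharaSoliton (ξ : ℝ) : ℝ := 105 / 169 * (cosh ((2 * √13)⁻¹ * ξ))⁻¹ ^ 4

theorem contDiff_kawaharaSoliton {m : WithTop ℕ∞} : ContDiff ℝ m kawaharaSoliton :=
  contDiff_const.mul ((contDiff_inv_cosh_pow 4).comp (contDiff_const.mul contDiff_id))

theorem iteratedDeriv_kawaharaSoliton (n : ℕ) (ξ : ℝ) :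
    iteratedDeriv n kawaharaSoliton ξ =
      105 / 169 *
        ((2 * √13)⁻¹ ^ n * iteratedDeriv n (fun y => (cosh y)⁻¹ ^ 4) ((2 * √13)⁻¹ * ξ)) := by
  unfold kawaharaSoliton
  rw [iteratedDeriv_const_mul_field, iteratedDeriv_comp_const_mul (contDiff_inv_cosh_pow 4)]

theorem kawaharaSoliton_ode (ξ : ℝ) :
    (1 - 205 / 169) * kawaharaSoliton ξ + kawaharaSoliton ξ ^ 2 / 2
      + iteratedDeriv 2 kawaharaSoliton ξ - iteratedDeriv 4 kawaharaSoliton ξ = 0 := by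
  have hk : (2 * √13)⁻¹ ^ 2 = 1 / 52 := by
    rw [inv_pow, mul_pow, sq_sqrt (by norm_num)]
    norm_num
  have hk4 : (2 * √13)⁻¹ ^ 4 = 1 / 2704 := by
    rw [show 4 = 2 * 2 from rfl, pow_mul, hk]
    norm_num
  rw [iteratedDeriv_kawaharaSoliton, iteratedDeriv_kawaharaSoliton, hk, hk4,
    iteratedDeriv_two_inv_cosh_pow, iteratedDeriv_four_inv_cosh_pow_four, kawaharaSoliton]
  ring

theorem kawahara_single_soliton (u : ℝ → ℝ → ℝ)
    (hu : ∀ x t, u x t = (105 / 169) *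
      (1 / Real.cosh ((1 / (2 * Real.sqrt 13)) * (x - (205 / 169) * t)))^4) :
    ∀ x t : ℝ,
      deriv (fun τ => u x τ) t + deriv (fun ξ => u ξ t) x
        + u x t * deriv (fun ξ => u ξ t) x
        + iteratedDeriv 3 (fun ξ => u ξ t) x
        - iteratedDeriv 5 (fun ξ => u ξ t) x = 0 := by
  have hu_wave : u = fun x t => kawaharaSoliton (x - 205 / 169 * t) := by
    funext x t
    rw [hu, kawaharaSoliton, one_div, one_div]
  subst hu_wave
  exact kawaharaOperator_travelingWave_eq_zero contDiff_kawaharaSoliton _ kawaharaSoliton_ode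
end
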